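/- Intersection for linear independencies: for a positive definite matrix Σ partitioned by disjoint sets a, b, c, d, if Π_{a|b.cd} = 0 and Π_{a|c.bd} = 0 then Π_{a|bc.d} = 0. -/

import Mathlib

/-!
Write `P = Σ_{ab|d}`, `Q = Σ_{ac|d}`. Conditioning in two steps
(`Σ_{xy|uv} = Σ_{xy|v} − Σ_{xu|v} Σ_{uu|v}⁻¹ Σ_{uy|v}`) turns the hypotheses into
`P = Q Σ_{cc|d}⁻¹ Σ_{cb|d}` and `Q = P Σ_{bb|d}⁻¹ Σ_{bc|d}`. Substituting the second into the
first gives `P Σ_{bb|d}⁻¹ Σ_{bb|cd} = 0`, and `Σ_{bb|cd}` is invertible because `Σ` is positive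
definite; hence `P = 0`, then `Q = 0`, so `Σ_{a,b∪c|d} = 0`.
-/

variable {n : ℕ}

/-- The submatrix (block) of `S` with rows `x` and columns `y`. -/
def blk (S : Matrix (Fin n) (Fin n) ℝ) (x y : Finset (Fin n)) : Matrix x y ℝ :=
  Matrix.of fun i j => S i j

/-- The conditional covariance block `Σ_{xy|z} = Σ_{xy} − Σ_{xz} Σ_{zz}⁻¹ Σ_{zy}`. -/
noncomputable def condCov (S : Matrix (Fin n) (Fin n) ℝ) (x y z : Finset (Fin n)) :
    Matrix x y ℝ :=
  blk S x y - blk S x z * (blk S z z)⁻¹ * blk S z y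

/-- The partial regression coefficient matrix `Π_{x|y.z} = Σ_{xy|z} Σ_{yy|z}⁻¹`. -/
noncomputable def regCoef (S : Matrix (Fin n) (Fin n) ℝ) (x y z : Finset (Fin n)) :
    Matrix x y ℝ :=
  condCov S x y z * (condCov S y y z)⁻¹

open Matrix Finset

section BlockInverse

variable {α l m p q : Type*} [CommRing α] [Fintype l] [Fintype m] [DecidableEq l] [DecidableEq m]

theorem Matrix.eq_zero_of_mul_eq_zero_of_isUnit_det {A : Matrix m m α} {B : Matrix p m α}
    (hA : IsUnit A.det) (h : B * A = 0) : B = 0 := by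
  rw [← mul_nonsing_inv_cancel_right A B hA, h, Matrix.zero_mul]

theorem Matrix.fromCols_mul_inv_fromBlocks_mul_fromRows
    (A : Matrix m m α) (B : Matrix m l α) (C : Matrix l m α) (D : Matrix l l α)
    (X₁ : Matrix p m α) (X₂ : Matrix p l α) (Y₁ : Matrix m q α) (Y₂ : Matrix l q α)
    (hD : IsUnit D.det) (hK : IsUnit (A - B * D⁻¹ * C).det) :
    fromCols X₁ X₂ * (fromBlocks A B C D)⁻¹ * fromRows Y₁ Y₂ =
      X₂ * D⁻¹ * Y₂ + (X₁ - X₂ * D⁻¹ * C) * (A - B * D⁻¹ * C)⁻¹ * (Y₁ - B * D⁻¹ * Y₂) := by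
  let := D.invertibleOfIsUnitDet hD
  let := (A - B * ⅟D * C).invertibleOfIsUnitDet (by rwa [invOf_eq_nonsing_inv])
  let := fromBlocks₂₂Invertible A B C D
  rw [← invOf_eq_nonsing_inv (fromBlocks A B C D), invOf_fromBlocks₂₂_eq,
    fromCols_mul_fromBlocks, fromCols_mul_fromRows]
  simp only [invOf_eq_nonsing_inv, Matrix.sub_mul, Matrix.mul_sub, Matrix.add_mul,
    Matrix.mul_add, Matrix.neg_mul, Matrix.mul_neg, Matrix.mul_assoc]
  abel

end BlockInverse

section CondCov

variable {S : Matrix (Fin n) (Fin n) ℝ}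

lemma fromBlocks_blk_eq_submatrix {u v : Finset (Fin n)} (huv : Disjoint u v) :
    fromBlocks (blk S u u) (blk S u v) (blk S v u) (blk S v v) =
      (blk S (u ∪ v) (u ∪ v)).submatrix (Equiv.Finset.union u v huv)
        (Equiv.Finset.union u v huv) := by
  ext (i | i) (j | j) <;> rfl

lemma blk_union_mul_inv_mul_blk_union {u v : Finset (Fin n)} (huv : Disjoint u v)
    (x y : Finset (Fin n)) :
    blk S x (u ∪ v) * (blk S (u ∪ v) (u ∪ v))⁻¹ * blk S (u ∪ v) y =
      fromCols (blk S x u) (blk S x v) *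
        (fromBlocks (blk S u u) (blk S u v) (blk S v u) (blk S v v))⁻¹ *
          fromRows (blk S u y) (blk S v y) := by
  have hcols : fromCols (blk S x u) (blk S x v) =
      (blk S x (u ∪ v)).submatrix id (Equiv.Finset.union u v huv) := by
    ext i (j | j) <;> rfl
  have hrows : fromRows (blk S u y) (blk S v y) =
      (blk S (u ∪ v) y).submatrix (Equiv.Finset.union u v huv) id := by
    ext (i | i) j <;> rfl
  rw [hcols, fromBlocks_blk_eq_submatrix huv, hrows, inv_submatrix_equiv, submatrix_mul_equiv,
    submatrix_mul_equiv, submatrix_id_id]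

lemma condCov_union {u v : Finset (Fin n)} (huv : Disjoint u v)
    (hv : IsUnit (blk S v v).det) (hu : IsUnit (condCov S u u v).det) (x y : Finset (Fin n)) :
    condCov S x y (u ∪ v) =
      condCov S x y v - condCov S x u v * (condCov S u u v)⁻¹ * condCov S u y v := by
  rw [condCov, blk_union_mul_inv_mul_blk_union huv,
    fromCols_mul_inv_fromBlocks_mul_fromRows _ _ _ _ _ _ _ _ hv hu]
  simp only [condCov]
  abel

lemma isUnit_det_blk (hS : S.PosDef) (x : Finset (Fin n)) : IsUnit (blk S x x).det :=
  (hS.submatrix Subtype.val_injective).det_pos.ne'.isUnit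

lemma isUnit_det_condCov (hS : S.PosDef) {x z : Finset (Fin n)} (hxz : Disjoint x z) :
    IsUnit (condCov S x x z).det := by
  let := (blk S z z).invertibleOfIsUnitDet (isUnit_det_blk hS z)
  have h := isUnit_det_blk hS (x ∪ z)
  rw [← det_submatrix_equiv_self (Equiv.Finset.union x z hxz),
    ← fromBlocks_blk_eq_submatrix hxz, det_fromBlocks₂₂, invOf_eq_nonsing_inv] at h
  exact isUnit_of_mul_isUnit_right h

lemma regCoef_eq_zero_iff {x y z : Finset (Fin n)} (hy : IsUnit (condCov S y y z).det) :
    regCoef S x y z = 0 ↔ condCov S x y z = 0 :=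
  ⟨eq_zero_of_mul_eq_zero_of_isUnit_det (isUnit_nonsing_inv_det _ hy),
    fun h => by rw [regCoef, h, Matrix.zero_mul]⟩

lemma condCov_apply_congr_right {x y y' z : Finset (Fin n)} (i : x) (j : y) (j' : y')
    (h : (j : Fin n) = j') : condCov S x y z i j = condCov S x y' z i j' := by
  simp only [condCov, Matrix.sub_apply, Matrix.mul_apply, blk, of_apply, h]

lemma condCov_union_right_eq_zero {x u v z : Finset (Fin n)}
    (hu : condCov S x u z = 0) (hv : condCov S x v z = 0) : condCov S x (u ∪ v) z = 0 := by
  ext i ⟨j, hj⟩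
  rcases mem_union.mp hj with hju | hjv
  · rw [condCov_apply_congr_right i ⟨j, hj⟩ ⟨j, hju⟩ rfl, hu, Matrix.zero_apply,
      Matrix.zero_apply]
  · rw [condCov_apply_congr_right i ⟨j, hj⟩ ⟨j, hjv⟩ rfl, hv, Matrix.zero_apply,
      Matrix.zero_apply]

end CondCov

theorem regCoef_intersection_general (S : Matrix (Fin n) (Fin n) ℝ) (hS : S.PosDef)
    (a b c d : Finset (Fin n))
    (hbc : Disjoint b c) (hbd : Disjoint b d) (hcd : Disjoint c d)
    (h1 : regCoef S a b (c ∪ d) = 0) (h2 : regCoef S a c (b ∪ d) = 0) :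
    regCoef S a (b ∪ c) d = 0 := by
  have hb_cd : Disjoint b (c ∪ d) := disjoint_union_right.mpr ⟨hbc, hbd⟩
  have hc_bd : Disjoint c (b ∪ d) := disjoint_union_right.mpr ⟨hbc.symm, hcd⟩
  have hd := isUnit_det_blk hS d
  have hb := isUnit_det_condCov hS hbd
  have hc := isUnit_det_condCov hS hcd
  have hP : condCov S a b d = condCov S a c d * (condCov S c c d)⁻¹ * condCov S c b d := by
    rw [← sub_eq_zero, ← condCov_union hcd hd hc, ← regCoef_eq_zero_iff
      (isUnit_det_condCov hS hb_cd)]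
    exact h1
  have hQ : condCov S a c d = condCov S a b d * (condCov S b b d)⁻¹ * condCov S b c d := by
    rw [← sub_eq_zero, ← condCov_union hbd hd hb, ← regCoef_eq_zero_iff
      (isUnit_det_condCov hS hc_bd)]
    exact h2
  have hPW : condCov S a b d * (condCov S b b d)⁻¹ * condCov S b b (c ∪ d) = 0 := by
    rw [condCov_union hcd hd hc, Matrix.mul_sub, nonsing_inv_mul_cancel_right _ _ hb,
      ← Matrix.mul_assoc, ← Matrix.mul_assoc, ← hQ, ← hP, sub_self]
  have hP0 : condCov S a b d = 0 :=
    eq_zero_of_mul_eq_zero_of_isUnit_det (isUnit_nonsing_inv_det _ hb)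
      (eq_zero_of_mul_eq_zero_of_isUnit_det (isUnit_det_condCov hS hb_cd) hPW)
  have hQ0 : condCov S a c d = 0 := by rw [hQ, hP0, Matrix.zero_mul, Matrix.zero_mul]
  rw [regCoef, condCov_union_right_eq_zero hP0 hQ0, Matrix.zero_mul]

/-- intersection, `Π_{a|b.cd} = 0` and `Π_{a|c.bd} = 0` imply
`Π_{a|bc.d} = 0`. -/
theorem regCoef_intersection (S : Matrix (Fin n) (Fin n) ℝ) (hS : S.PosDef)
    (a b c d : Finset (Fin n))
    (hab : Disjoint a b) (hac : Disjoint a c) (had : Disjoint a d)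
    (hbc : Disjoint b c) (hbd : Disjoint b d) (hcd : Disjoint c d)
    (h1 : regCoef S a b (c ∪ d) = 0) (h2 : regCoef S a c (b ∪ d) = 0) :
    regCoef S a (b ∪ c) d = 0 :=
  regCoef_intersection_general S hS a b c d hbc hbd hcd h1 h2
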